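/- arXiv:0908.1989 — 4 statements merged into one kernel-verified Lean document; each statement's English description precedes it below -/
import Mathlib

section
/- Let R be a Z/2-graded ring, and let Q = R[θ₁,…,θₙ,∂₁,…,∂ₙ] where the θᵢ are free supercommuting odd variables, ∂ᵢ = ∂/∂θᵢ (so ∂ᵢθⱼ + θⱼ∂ᵢ = δᵢⱼ, ∂ᵢ∂ⱼ + ∂ⱼ∂ᵢ = 0), and the θ's and ∂'s supercommute with R. Then for any Q-module M, every A ∈ M has a unique expansion A = Σ_μ A_μ θ^μ, where μ ranges over multi-indices of 0's and 1's of length n, and each A_μ lies in the joint annihilator ann(∂₁,…,∂ₙ) ⊆ M. -/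
/-!
For a single pair `∂θ + θ∂ = 1` with `∂² = 0` every `m` splits as `m = θ • (∂ • m) + ∂ • (θ • m)`
with both pieces killed by `∂`, and `θ • x + y = 0` with `∂ • x = ∂ • y = 0` forces `x = y = 0`
(apply `∂`, then `x = (∂θ + θ∂) • x = 0`). Induct on `n`, peeling off `θ₀`: since `∂₀` anticommutes
with the remaining generators, the remaining monomials preserve `ker ∂₀`, and the expansion in
the remaining variables of an element of `ker ∂₀` can be taken with coefficients in `ker ∂₀`.
-/

open scoped BigOperators

/-- The ordered monomial `θ^μ = θ₁^{μ₁} ⋯ θₙ^{μₙ}` for a multi-index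
`μ ∈ {0,1}ⁿ` (encoded as `μ : Fin n → Bool`). -/
def thetaProd {Q : Type*} [Ring Q] (n : ℕ) (θ : Fin n → Q) (μ : Fin n → Bool) : Q :=
  ((List.finRange n).map fun i => if μ i then θ i else 1).prod

theorem Fintype.sum_fin_succ_bool {α : Type*} [AddCommMonoid α] {n : ℕ}
    (g : (Fin (n + 1) → Bool) → α) :
    ∑ μ, g μ = ∑ ν, g (Fin.cons true ν) + ∑ ν, g (Fin.cons false ν) := by
  rw [← Equiv.sum_comp (Fin.consEquiv fun _ => Bool) g, Fintype.sum_prod_type, Fintype.sum_bool]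
  rfl

theorem exists_eq_fin_cons {α : Type*} {n : ℕ} (μ : Fin (n + 1) → α) :
    ∃ b ν, μ = Fin.cons b ν :=
  ⟨_, _, (Fin.cons_self_tail μ).symm⟩

section SuperWeyl

variable {Q M : Type*} [Ring Q] [AddCommGroup M] [Module Q M]

theorem thetaProd_zero (θ : Fin 0 → Q) (μ : Fin 0 → Bool) : thetaProd 0 θ μ = 1 := rfl

theorem thetaProd_cons {n : ℕ} (θ : Fin (n + 1) → Q) (b : Bool) (ν : Fin n → Bool) :
    thetaProd (n + 1) θ (Fin.cons b ν) = (if b then θ 0 else 1) * thetaProd n (Fin.tail θ) ν := by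
  simp [thetaProd, List.finRange_succ, Function.comp_def, Fin.tail]

theorem sum_thetaProd_smul_succ {n : ℕ} (θ : Fin (n + 1) → Q) (c : (Fin (n + 1) → Bool) → M) :
    ∑ μ, thetaProd (n + 1) θ μ • c μ =
      θ 0 • ∑ ν, thetaProd n (Fin.tail θ) ν • c (Fin.cons true ν) +
        ∑ ν, thetaProd n (Fin.tail θ) ν • c (Fin.cons false ν) := by
  simp only [Fintype.sum_fin_succ_bool, thetaProd_cons, Finset.smul_sum, mul_smul, if_true,
    Bool.false_eq_true, if_false, one_smul]

theorem smul_smul_eq_zero_of_mul_eq_neg {q x : Q} (hqx : q * x = -(x * q)) {m : M}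
    (hm : q • m = 0) : q • x • m = 0 := by
  rw [smul_smul, hqx, neg_smul, mul_smul, hm, smul_zero, neg_zero]

theorem smul_thetaProd_smul_eq_zero {n : ℕ} {θ : Fin n → Q} {q : Q}
    (hq : ∀ i, q * θ i = -(θ i * q)) (μ : Fin n → Bool) {m : M} (hm : q • m = 0) :
    q • thetaProd n θ μ • m = 0 := by
  induction n with
  | zero => simpa [thetaProd_zero] using hm
  | succ n ih =>
    obtain ⟨b, ν, rfl⟩ := exists_eq_fin_cons μ
    have hν := ih (θ := Fin.tail θ) (fun i => hq i.succ) ν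
    rw [thetaProd_cons, mul_smul]
    cases b
    · simpa using hν
    · exact smul_smul_eq_zero_of_mul_eq_neg (hq 0) hν

theorem smul_eq_smul_add_smul_smul {d t : Q} (h : d * t + t * d = 1) (m : M) :
    m = t • d • m + d • t • m := by
  rw [← mul_smul, ← mul_smul, ← add_smul, add_comm, h, one_smul]

theorem eq_zero_of_smul_add_eq_zero {d t : Q} (h : d * t + t * d = 1) {x y : M}
    (hx : d • x = 0) (hy : d • y = 0) (hxy : t • x + y = 0) : x = 0 ∧ y = 0 := by
  have hdtx : d • t • x = 0 := by simpa [hy] using congrArg (d • ·) hxy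
  have hx0 : x = 0 := by
    rw [smul_eq_smul_add_smul_smul h x, hx, hdtx, smul_zero, add_zero]
  exact ⟨hx0, by simpa [hx0] using hxy⟩

theorem pd_mul_theta_of_ne {n : ℕ} {θ pd : Fin n → Q}
    (hmix : ∀ i j, pd i * θ j + θ j * pd i = if i = j then 1 else 0) {i j : Fin n} (hij : i ≠ j) :
    pd i * θ j = -(θ j * pd i) :=
  eq_neg_of_add_eq_zero_left (by simpa [hij] using hmix i j)

theorem anticommutator_tail {n : ℕ} {θ pd : Fin (n + 1) → Q}
    (hmix : ∀ i j, pd i * θ j + θ j * pd i = if i = j then 1 else 0) (i j : Fin n) :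
    Fin.tail pd i * Fin.tail θ j + Fin.tail θ j * Fin.tail pd i = if i = j then 1 else 0 := by
  simpa [Fin.tail] using hmix i.succ j.succ

theorem exists_sum_thetaProd_smul_eq_of_mem {n : ℕ} (θ pd : Fin n → Q)
    (hpdsq : ∀ i, pd i * pd i = 0)
    (hpdanti : ∀ i j, i ≠ j → pd i * pd j = -(pd j * pd i))
    (hmix : ∀ i j, pd i * θ j + θ j * pd i = if i = j then 1 else 0)
    (S : Set M) (hθS : ∀ i, ∀ m ∈ S, θ i • m ∈ S) (hpdS : ∀ i, ∀ m ∈ S, pd i • m ∈ S)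
    {A : M} (hA : A ∈ S) :
    ∃ c : (Fin n → Bool) → M,
      (∀ μ, c μ ∈ S) ∧ (∀ μ i, pd i • c μ = 0) ∧ A = ∑ μ, thetaProd n θ μ • c μ := by
  induction n generalizing S A with
  | zero => exact ⟨fun _ => A, fun _ => hA, fun _ i => i.elim0, by simp [thetaProd_zero]⟩
  | succ n ih =>
    have hker (m : M) : pd 0 • pd 0 • m = 0 := by rw [smul_smul, hpdsq, zero_smul]
    set S' := S ∩ {m | pd 0 • m = 0}
    have hθS' (i : Fin n) (m : M) (hm : m ∈ S') : Fin.tail θ i • m ∈ S' :=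
      ⟨hθS _ _ hm.1, smul_smul_eq_zero_of_mul_eq_neg
        (pd_mul_theta_of_ne hmix (Fin.succ_ne_zero i).symm) hm.2⟩
    have hpdS' (i : Fin n) (m : M) (hm : m ∈ S') : Fin.tail pd i • m ∈ S' :=
      ⟨hpdS _ _ hm.1, smul_smul_eq_zero_of_mul_eq_neg
        (hpdanti 0 i.succ (Fin.succ_ne_zero i).symm) hm.2⟩
    have ih' {B : M} (hB : B ∈ S') := ih (Fin.tail θ) (Fin.tail pd) (fun i => hpdsq i.succ)
      (fun i j hij => hpdanti i.succ j.succ ((Fin.succ_injective _).ne hij))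
      (anticommutator_tail hmix) S' hθS' hpdS' hB
    obtain ⟨c₁, hc₁S, hc₁, hA₁⟩ := ih' (B := pd 0 • A) ⟨hpdS 0 A hA, hker A⟩
    obtain ⟨c₀, hc₀S, hc₀, hA₀⟩ := ih' (B := pd 0 • θ 0 • A) ⟨hpdS 0 _ (hθS 0 A hA), hker _⟩
    refine ⟨fun μ => if μ 0 then c₁ (Fin.tail μ) else c₀ (Fin.tail μ), ?_, ?_, ?_⟩
    · intro μ
      dsimp only
      cases μ 0
      exacts [(hc₀S _).1, (hc₁S _).1]
    · intro μ i
      dsimp only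
      cases i using Fin.cases <;> cases μ 0
      exacts [(hc₀S _).2, (hc₁S _).2, hc₀ _ _, hc₁ _ _]
    · simp only [sum_thetaProd_smul_succ, Fin.cons_zero, Fin.tail_cons, if_true,
        Bool.false_eq_true, if_false, ← hA₀, ← hA₁]
      exact smul_eq_smul_add_smul_smul (by simpa using hmix 0 0) A

theorem eq_zero_of_sum_thetaProd_smul_eq_zero {n : ℕ} (θ pd : Fin n → Q)
    (hmix : ∀ i j, pd i * θ j + θ j * pd i = if i = j then 1 else 0)
    {c : (Fin n → Bool) → M} (hc : ∀ μ i, pd i • c μ = 0)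
    (hsum : ∑ μ, thetaProd n θ μ • c μ = 0) : c = 0 := by
  induction n with
  | zero =>
    funext μ
    simpa [thetaProd_zero, Subsingleton.elim _ μ] using hsum
  | succ n ih =>
    rw [sum_thetaProd_smul_succ] at hsum
    have hkill (b : Bool) : pd 0 • ∑ ν, thetaProd n (Fin.tail θ) ν • c (Fin.cons b ν) = 0 := by
      rw [Finset.smul_sum]
      exact Finset.sum_eq_zero fun ν _ => smul_thetaProd_smul_eq_zero
        (fun j => pd_mul_theta_of_ne hmix (Fin.succ_ne_zero j).symm) ν (hc _ 0)
    have htail (b : Bool) (hb : ∑ ν, thetaProd n (Fin.tail θ) ν • c (Fin.cons b ν) = 0) :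
        (fun ν => c (Fin.cons b ν)) = 0 :=
      ih (Fin.tail θ) (Fin.tail pd) (anticommutator_tail hmix) (fun ν i => hc _ i.succ) hb
    obtain ⟨h₁, h₀⟩ := eq_zero_of_smul_add_eq_zero (by simpa using hmix 0 0) (hkill true)
      (hkill false) hsum
    funext μ
    obtain ⟨b, ν, rfl⟩ := exists_eq_fin_cons μ
    cases b
    exacts [congrFun (htail false h₀) ν, congrFun (htail true h₁) ν]

end SuperWeyl

theorem stmt_2_general {Q M : Type*} [Ring Q] [AddCommGroup M] [Module Q M] (n : ℕ)
    (θ pd : Fin n → Q)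
    (hpdsq : ∀ i, pd i * pd i = 0)
    (hpdanti : ∀ i j, i ≠ j → pd i * pd j = -(pd j * pd i))
    (hmix : ∀ i j, pd i * θ j + θ j * pd i = if i = j then 1 else 0)
    (A : M) :
    ∃! c : (Fin n → Bool) → M,
      (∀ μ i, pd i • c μ = 0) ∧
      A = ∑ μ : Fin n → Bool, thetaProd n θ μ • c μ := by
  obtain ⟨c, -, hc, hA⟩ := exists_sum_thetaProd_smul_eq_of_mem θ pd hpdsq hpdanti hmix Set.univ
    (fun _ _ _ => trivial) (fun _ _ _ => trivial) (Set.mem_univ A)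
  refine ⟨c, ⟨hc, hA⟩, fun c' ⟨hc', hA'⟩ => sub_eq_zero.mp ?_⟩
  refine eq_zero_of_sum_thetaProd_smul_eq_zero θ pd hmix (c := c' - c) ?_ ?_
  · intro μ i
    simp only [Pi.sub_apply, smul_sub, hc, hc', sub_zero]
  · simp only [Pi.sub_apply, smul_sub, Finset.sum_sub_distrib, ← hA, ← hA', sub_self]

/-- In the super Weyl algebra `Q = R[θ₁,…,θₙ,∂₁,…,∂ₙ]`
(`θᵢθⱼ = −θⱼθᵢ`, `∂ᵢ∂ⱼ = −∂ⱼ∂ᵢ`, `∂ᵢθⱼ + θⱼ∂ᵢ = δᵢⱼ`), every element `A` of a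
`Q`-module `M` has a unique expansion `A = Σ_μ θ^μ • A_μ` with each `A_μ` in the
joint annihilator of `∂₁,…,∂ₙ`. -/
theorem stmt_2 {Q M : Type*} [Ring Q] [AddCommGroup M] [Module Q M] (n : ℕ)
    (θ pd : Fin n → Q)
    (hθsq : ∀ i, θ i * θ i = 0)
    (hθanti : ∀ i j, i ≠ j → θ i * θ j = -(θ j * θ i))
    (hpdsq : ∀ i, pd i * pd i = 0)
    (hpdanti : ∀ i j, i ≠ j → pd i * pd j = -(pd j * pd i))
    (hmix : ∀ i j, pd i * θ j + θ j * pd i = if i = j then 1 else 0)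
    (A : M) :
    ∃! c : (Fin n → Bool) → M,
      (∀ μ i, pd i • c μ = 0) ∧
      A = ∑ μ : Fin n → Bool, thetaProd n θ μ • c μ :=
  stmt_2_general n θ pd hpdsq hpdanti hmix A
end

section
/- Let Λ be a supercommutative ring and A = Λ[z,θ,ρ] the superalgebra with z even and θ, ρ odd. Let D = ρ∂_z + ∂_θ. Then the kernel of D acting on A equals the Λ-subalgebra generated by u = z − θρ and ρ. Concretely, an element P + ρQ with P, Q ∈ Λ[z,θ] satisfies D(P + ρQ) = 0 if and only if, writing P = P₀ + θP₁ and Q = Q₀ + θQ₁ with Pᵢ, Qᵢ ∈ Λ[z], one has P₁ = 0 and Q₁ = ∂_zP₀. -/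
open Polynomial

noncomputable section

/-- The polynomial superalgebra `Λ[z,θ,ρ]` (`z` even, `θ, ρ` odd):
an element `a + θb + ρc + θρd` is encoded by its components
`(a, b, c, d)` with `a, b, c, d ∈ Λ[z]`. -/
abbrev A4 (Λ : Type*) [CommRing Λ] :=
  Polynomial Λ × Polynomial Λ × Polynomial Λ × Polynomial Λ

variable {Λ : Type*} [CommRing Λ]

/-- Supercommutative multiplication on `Λ[z,θ,ρ]` (θ² = ρ² = 0, θρ = −ρθ). -/
def mulA (x y : A4 Λ) : A4 Λ :=
  (x.1 * y.1,
   x.1 * y.2.1 + x.2.1 * y.1,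
   x.1 * y.2.2.1 + x.2.2.1 * y.1,
   x.1 * y.2.2.2 + x.2.2.2 * y.1 + x.2.1 * y.2.2.1 - x.2.2.1 * y.2.1)

/-- The identity `1`. -/
def oneA : A4 Λ := (1, 0, 0, 0)
/-- The even coordinate `z`. -/
def zA : A4 Λ := (Polynomial.X, 0, 0, 0)
/-- The odd coordinate `θ`. -/
def thA : A4 Λ := (0, 1, 0, 0)
/-- The odd coordinate `ρ`. -/
def rhA : A4 Λ := (0, 0, 1, 0)
/-- The inclusion of `Λ[z,θ]` (pairs `(f,g)` encoding `f + θg`) into `Λ[z,θ,ρ]`. -/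
def emb (f g : Polynomial Λ) : A4 Λ := (f, g, 0, 0)

/-- The even derivation `∂_z`. -/
def dZ (x : A4 Λ) : A4 Λ :=
  (derivative x.1, derivative x.2.1, derivative x.2.2.1, derivative x.2.2.2)
/-- The odd derivation `∂_θ`. -/
def dTheta (x : A4 Λ) : A4 Λ := (x.2.1, 0, x.2.2.2, 0)
/-- The odd derivation `∂_ρ`. -/
def dRho (x : A4 Λ) : A4 Λ := (x.2.2.1, -x.2.2.2, 0, 0)
/-- The odd vector field `D = ρ∂_z + ∂_θ`. -/
def Dop (x : A4 Λ) : A4 Λ := mulA rhA (dZ x) + dTheta x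

/-! On components, `D (a + θb + ρc + θρd) = b + ρ(∂_z a + d) − θρ ∂_z b`, so `D` kills an element
exactly when `b = 0` and `d = −∂_z a`; and `P + ρQ` has components `(P₀, P₁, Q₀, −Q₁)`, the sign
coming from `ρθ = −θρ`. -/

theorem mulA_rhA (y : A4 Λ) : mulA rhA y = (0, 0, y.1, -y.2.1) := by
  simp [mulA, rhA]

theorem Dop_apply (a b c d : Polynomial Λ) :
    Dop ((a, b, c, d) : A4 Λ) = (b, 0, derivative a + d, -derivative b) := by
  simp only [Dop, dZ, dTheta, mulA_rhA, Prod.mk_add_mk, zero_add, add_zero]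

theorem Dop_eq_zero_iff (a b c d : Polynomial Λ) :
    Dop ((a, b, c, d) : A4 Λ) = 0 ↔ b = 0 ∧ d = -derivative a := by
  simp only [Dop_apply, Prod.mk_eq_zero]
  constructor
  · rintro ⟨hb, -, had, -⟩
    exact ⟨hb, eq_neg_of_add_eq_zero_right had⟩
  · rintro ⟨rfl, rfl⟩
    simp

theorem emb_add_mulA_rhA_emb (P0 P1 Q0 Q1 : Polynomial Λ) :
    emb P0 P1 + mulA rhA (emb Q0 Q1) = (P0, P1, Q0, -Q1) := by
  simp [emb, mulA_rhA]

/-- the kernel of `D = ρ∂_z + ∂_θ` on `Λ[z,θ,ρ]` is the subalgebra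
generated by `u = z − θρ` and `ρ`.  Concretely, for `P = P₀ + θP₁` and
`Q = Q₀ + θQ₁` with `Pᵢ, Qᵢ ∈ Λ[z]`, the element `P + ρQ` is killed by `D`
iff `P₁ = 0` and `Q₁ = ∂_zP₀`. -/
theorem stmt_7 (P0 P1 Q0 Q1 : Polynomial Λ) :
    Dop (emb P0 P1 + mulA rhA (emb Q0 Q1)) = (0 : A4 Λ)
      ↔ P1 = 0 ∧ Q1 = derivative P0 := by
  rw [emb_add_mulA_rhA_emb, Dop_eq_zero_iff, neg_inj]
end
end

section
/- Let Λ be a supercommutative ring, A = Λ[z,θ,ρ] with z even and θ, ρ odd, and let D = ρ∂_z + ∂_θ. Define τ: Λ[z,θ] → A by τ(h) = h − θ∂_θ(h) + ρ(θ∂_z(h) + ∂_θ(h)). Then: (1) D(τ(h)) = 0 for all h ∈ Λ[z,θ]; (2) τ is injective; (3) every element φ ∈ A with D(φ) = 0 equals τ(h) for a unique h ∈ Λ[z,θ]. -/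
/-!
In components `a + θb + ρc + θρd`, the map `τ` sends `f + θg` to `f + ρg − θρ f'`, and
`D(a + θb + ρc + θρd) = b + ρ(d + a') + θρ(−b')`. So `D φ = 0` says exactly `b = 0` and
`d = −a'`, i.e. `φ = τ(a + θc)`; and `τ` is injective because `f` and `g` are read off
from the `1`- and `ρ`-components of `τ(f + θg)`.
-/

open Polynomial

noncomputable section

variable {Λ : Type*} [CommRing Λ]

/-- `τ(h) = h − θ∂_θh + ρ(θ∂_zh + ∂_θh)` on `Λ[z,θ]` (pairs `(f,g)` = `f + θg`). -/
def tau (f g : Polynomial Λ) : A4 Λ :=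
  emb f g - mulA thA (dTheta (emb f g))
    + mulA rhA (mulA thA (dZ (emb f g)) + dTheta (emb f g))

theorem tau_eq_mk (f g : Λ[X]) : tau f g = (f, 0, g, -derivative f) := by
  simp [tau, emb, mulA, thA, rhA, dTheta, dZ]

theorem dop_eq_mk (x : A4 Λ) :
    Dop x = (x.2.1, 0, x.2.2.2 + derivative x.1, -derivative x.2.1) := by
  simp [Dop, mulA, rhA, dTheta, dZ, add_comm]

theorem dop_tau (f g : Λ[X]) : Dop (tau f g) = 0 := by
  simp [tau_eq_mk, dop_eq_mk, Prod.ext_iff]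

theorem tau_injective : Function.Injective fun p : Λ[X] × Λ[X] => tau p.1 p.2 := by
  rintro ⟨f, g⟩ ⟨f', g'⟩ h
  simp only [tau_eq_mk, Prod.mk.injEq] at h
  exact Prod.ext h.1 h.2.2.1

theorem dop_eq_zero_iff (φ : A4 Λ) : Dop φ = 0 ↔ tau φ.1 φ.2.2.1 = φ := by
  obtain ⟨a, b, c, d⟩ := φ
  simp only [dop_eq_mk, tau_eq_mk, Prod.ext_iff, Prod.fst_zero, Prod.snd_zero, true_and]
  constructor
  · rintro ⟨hb, hd, -⟩
    exact ⟨hb.symm, (eq_neg_of_add_eq_zero_left hd).symm⟩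
  · rintro ⟨rfl, rfl⟩
    simp

/-- for `τ(h) = h − θ∂_θh + ρ(θ∂_zh + ∂_θh)` on `Λ[z,θ]`:
(1) `D(τ(h)) = 0`; (2) `τ` is injective; (3) every `φ` with `D(φ) = 0` is
`τ(h)` for a unique `h ∈ Λ[z,θ]`. -/
theorem stmt_9 :
    (∀ f g : Polynomial Λ, Dop (tau f g) = 0) ∧
    (Function.Injective fun p : Polynomial Λ × Polynomial Λ => tau p.1 p.2) ∧
    (∀ φ : A4 Λ, Dop φ = 0 →
      ∃! p : Polynomial Λ × Polynomial Λ, tau p.1 p.2 = φ) := by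
  refine ⟨dop_tau, tau_injective, fun φ hφ => ?_⟩
  refine ⟨(φ.1, φ.2.2.1), (dop_eq_zero_iff φ).1 hφ, fun p hp => ?_⟩
  exact tau_injective (hp.trans ((dop_eq_zero_iff φ).1 hφ).symm)
end
end

section
/- Let Λ be a supercommutative ring, A = Λ[z,θ,ρ] with z even and θ, ρ odd, and let D = ρ∂_z + ∂_θ with kernel O_{X̂} = ker D ⊆ A. Let I ⊆ ker D be the ideal of ker D generated by ρ. Then (ρ·A) ∩ ker D = I. That is, an element of the form ρg with g ∈ Λ[z,θ] lies in ker D if and only if it lies in the ideal of ker D generated by ρ. -/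
open Polynomial

noncomputable section

variable {Λ : Type*} [CommRing Λ]

/-- The lift `τ(g) = g + ρθ ∂_z g` of `g ∈ Λ[z]` to `ker D`; since `ρθ = -θρ`, its
`θρ`-component is `-g'`. -/
def kerLift (g : Polynomial Λ) : A4 Λ := (g, 0, 0, -derivative g)

theorem Dop_apply_s17 (x : A4 Λ) :
    Dop x = (x.2.1, 0, derivative x.1 + x.2.2.2, -derivative x.2.1) := by
  simp [Dop, mulA_rhA, dZ, dTheta]

theorem thetaCoeff_eq_zero_of_Dop_eq_zero {k : A4 Λ} (hk : Dop k = 0) : k.2.1 = 0 := by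
  simpa [Dop_apply_s17] using congrArg Prod.fst hk

/-- `D(ρy) = -ρ ∂_θ y`. -/
theorem Dop_mulA_rhA (y : A4 Λ) : Dop (mulA rhA y) = (0, 0, -y.2.1, 0) := by
  simp [Dop_apply_s17, mulA_rhA]

theorem Dop_mulA_rhA_eq_zero_iff {y : A4 Λ} : Dop (mulA rhA y) = 0 ↔ y.2.1 = 0 := by
  simp [Dop_mulA_rhA, Prod.ext_iff]

theorem Dop_kerLift (g : Polynomial Λ) : Dop (kerLift g) = 0 := by
  simp [Dop_apply_s17, kerLift]

theorem mulA_rhA_kerLift {y : A4 Λ} (hy : y.2.1 = 0) : mulA rhA (kerLift y.1) = mulA rhA y := by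
  simp [mulA_rhA, kerLift, hy]

/-- with `O_{X̂} = ker D ⊆ Λ[z,θ,ρ]` and `I` the ideal of
`ker D` generated by `ρ` (namely `{ρ·k : D(k) = 0}`), one has
`(ρ·Λ[z,θ,ρ]) ∩ ker D = I`. -/
theorem stmt_17 :
    {x : A4 Λ | (∃ y : A4 Λ, x = mulA rhA y) ∧ Dop x = 0}
      = {x : A4 Λ | ∃ k : A4 Λ, Dop k = 0 ∧ x = mulA rhA k} := by
  ext x
  constructor
  · rintro ⟨⟨y, rfl⟩, hD⟩
    exact ⟨kerLift y.1, Dop_kerLift _,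
      (mulA_rhA_kerLift (Dop_mulA_rhA_eq_zero_iff.1 hD)).symm⟩
  · rintro ⟨k, hk, rfl⟩
    exact ⟨⟨k, rfl⟩, Dop_mulA_rhA_eq_zero_iff.2 (thetaCoeff_eq_zero_of_Dop_eq_zero hk)⟩
end
end
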